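/- Let F be a field with char(F) ≠ 2, 3, and let α ∈ F be nonzero. The algebra A over F with e1·e1 = (1/2)e1, e1·e2 = e2·e1 = (1/2)e2, e2·e2 = α·e1 has automorphism group exactly {id, d} where d is the linear map fixing e1 and sending e2 to −e2. -/
import Mathlib


/-- Multiplication on `F × F` given by `e1·e1 = (1/2)e1`, `e1·e2 = e2·e1 = (1/2)e2`,
`e2·e2 = α·e1`, extended bilinearly. -/
def mul7 {F : Type*} [Field F] (α : F) (x y : F × F) : F × F :=
  ((1/2 : F) * x.1 * y.1 + α * x.2 * y.2,
   (1/2 : F) * x.1 * y.2 + (1/2 : F) * x.2 * y.1)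

theorem stmt_7 {F : Type*} [Field F] (h2 : ringChar F ≠ 2) (h3 : ringChar F ≠ 3)
    (α : F) (hα : α ≠ 0) (f : (F × F) ≃ₗ[F] (F × F)) :
    (∀ x y : F × F, f (mul7 α x y) = mul7 α (f x) (f y)) ↔
      ((∀ v : F × F, f v = v) ∨ (f (1, 0) = (1, 0) ∧ f (0, 1) = (0, -1))) := by
  have two_ne : (2:F) ≠ 0 := Ring.two_ne_zero h2
  have key : ∀ v : F × F, f v = v.1 • f (1,0) + v.2 • f (0,1) := by
    intro v
    rw [← f.map_smul, ← f.map_smul, ← f.map_add]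
    congr 1
    ext <;> simp
  constructor
  · intro h
    have four_ne : (4:F) ≠ 0 := by
      have h4 : (4:F) = 2 * 2 := by norm_num
      rw [h4]; exact mul_ne_zero two_ne two_ne
    obtain ⟨a, b, hab⟩ : ∃ a b : F, f (1,0) = (a, b) := ⟨_, _, rfl⟩
    obtain ⟨c, d, hcd⟩ : ∃ c d : F, f (0,1) = (c, d) := ⟨_, _, rfl⟩
    have e11 := h (1,0) (1,0)
    have e12 := h (1,0) (0,1)
    have e22 := h (0,1) (0,1)
    rw [show mul7 α ((1:F),(0:F)) (1,0) = ((1/2:F), (0:F)) by simp [mul7], key] at e11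
    rw [show mul7 α ((1:F),(0:F)) ((0:F),(1:F)) = ((0:F), (1/2:F)) by simp [mul7], key] at e12
    rw [show mul7 α ((0:F),(1:F)) (0,1) = (α, (0:F)) by simp [mul7], key] at e22
    rw [hab, hcd] at e11 e12 e22
    simp only [mul7, Prod.mk.injEq, Prod.smul_mk, smul_eq_mul, Prod.mk_add_mk,
      mul_zero, zero_mul, add_zero, zero_add, mul_one, one_mul] at e11 e12 e22
    obtain ⟨e11a, e11b⟩ := e11
    obtain ⟨e12a, e12b⟩ := e12
    obtain ⟨e22a, e22b⟩ := e22
    field_simp at e11a e11b e12a e12b e22a e22b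
    by_cases hb : b = 0
    · subst hb
      have ha1 : a = 1 := by
        have h0' : a * (a - 1) = 0 := by linear_combination -e11a
        rcases mul_eq_zero.mp h0' with h0'' | h0''
        · exfalso
          have heq : f ((1:F),(0:F)) = f 0 := by rw [hab, h0'', map_zero]; rfl
          have := f.injective heq
          simp [Prod.ext_iff] at this
        · exact sub_eq_zero.mp h0''
      subst ha1
      have hcd0 : c * d = 0 := by
        have h0 : c * d * 2 = 0 := by linear_combination -e22b
        exact (mul_eq_zero.mp h0).resolve_right two_ne
      rcases mul_eq_zero.mp hcd0 with hc0 | hd0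
      · subst hc0
        have hd2 : d * d = 1 := by
          have h0 : α * (d * d - 1) * 2 = 0 := by linear_combination -e22a
          have h0' : α * (d * d - 1) = 0 := (mul_eq_zero.mp h0).resolve_right two_ne
          have h0'' : d * d - 1 = 0 := (mul_eq_zero.mp h0').resolve_left hα
          linear_combination h0''
        rcases mul_self_eq_one_iff.mp hd2 with hd1 | hdm1
        · left
          intro v
          rw [key v, hab, hcd, hd1]
          ext <;> simp
        · right
          constructor
          · rw [hab]
          · rw [hcd, hdm1]
      · subst hd0
        exfalso
        have heq : f ((0:F),(1:F)) = f (c • ((1:F),(0:F))) := by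
          rw [map_smul, hab, hcd]
          ext <;> simp
        have := f.injective heq
        simp [Prod.ext_iff] at this
    · exfalso
      have h0'' : 2 * a - 1 = 0 := by
        have h0' : b * (2 * a - 1) = 0 := by linear_combination -e11b
        exact (mul_eq_zero.mp h0').resolve_left hb
      have hd : d = 2 * b * c := by linear_combination 2 * e12b + d * h0''
      have heq : f ((0:F),(1:F)) = f ((2*c) • ((1:F),(0:F))) := by
        rw [map_smul, hab, hcd]
        ext
        · simp
          linear_combination -c * h0''
        · simp
          linear_combination hd
      have := f.injective heq
      simp [Prod.ext_iff] at this
  · rintro (hid | ⟨ha, hb⟩)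
    · intro x y; rw [hid, hid, hid]
    · have keyd : ∀ v : F × F, f v = (v.1, -v.2) := by
        intro v
        rw [key v, ha, hb]
        ext <;> simp
      intro x y
      rw [keyd, keyd, keyd]
      simp only [mul7, Prod.mk.injEq]
      constructor <;> ring
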